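/- arXiv:1601.04766 — 7 statements merged into one kernel-verified Lean document; each statement's English description precedes it below -/
import Mathlib

section
/- Let φ : R^d → [0,∞] be finite on some neighborhood of the origin and coordinatewise even, i.e. φ(ε⊗λ) = φ(λ) for every sign vector ε ∈ {−1,+1}^d, where (ε⊗λ)(j) = ε(j)λ(j). Let ξ = (ξ(1),…,ξ(d)) be a random vector such that for every λ ∈ R^d with φ(λ) < ∞ and every sign vector ε ∈ {−1,+1}^d one has E exp(Σ_{j=1}^d ε(j)λ(j)ξ(j)) ≤ exp(φ(λ)). Then for every x ∈ R^d with all coordinates nonnegative, U(ξ, x) ≤ exp(−φ*(x)) (multidimensional Chernov inequality). -/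
open MeasureTheory Real ENNReal

/-- The multivariate tail function `U(ξ, x)`: the maximum over sign vectors
`ε ∈ {−1,+1}^d` of `P(∀ j, ε(j) ξ(j) > x(j))`. -/
noncomputable def tailFn {Ω : Type*} [MeasurableSpace Ω] (μ : Measure Ω)
    {d : ℕ} (ξ : Ω → Fin d → ℝ) (x : Fin d → ℝ) : ℝ :=
  sSup { t | ∃ ε : Fin d → ℝ, (∀ j, ε j = 1 ∨ ε j = -1) ∧
    t = (μ {ω | ∀ j, x j < ε j * ξ ω j}).toReal }

/-- Young–Fenchel (Legendre) transform of `φ : ℝ^d → [0,∞]`: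
`φ*(y) = sup { ⟨x,y⟩ − φ(x) : φ(x) < ∞ }`. -/
noncomputable def legendreE {d : ℕ} (φ : (Fin d → ℝ) → ℝ≥0∞) (y : Fin d → ℝ) : ℝ :=
  sSup { t | ∃ x : Fin d → ℝ, φ x ≠ ⊤ ∧ t = (∑ j, x j * y j) - (φ x).toReal }

/-- Multidimensional Chernov inequality: if `φ : ℝ^d → [0,∞]` is finite on a
neighborhood of the origin and coordinatewise even, and
`E exp(Σ_j ε(j) λ(j) ξ(j)) ≤ exp(φ(λ))` for every `λ` with `φ(λ) < ∞` and every
sign vector `ε`, then `U(ξ, x) ≤ exp(−φ*(x))` for every coordinatewise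
nonnegative `x`. -/
theorem stmt0 {d : ℕ} (φ : (Fin d → ℝ) → ℝ≥0∞)
    (hfin : ∃ V ∈ nhds (0 : Fin d → ℝ), ∀ x ∈ V, φ x ≠ ⊤)
    (heven : ∀ ε : Fin d → ℝ, (∀ j, ε j = 1 ∨ ε j = -1) →
      ∀ l : Fin d → ℝ, φ (fun j => ε j * l j) = φ l)
    {Ω : Type*} [MeasurableSpace Ω] (μ : Measure Ω) [IsProbabilityMeasure μ]
    (ξ : Ω → Fin d → ℝ) (hmeas : Measurable ξ)
    (hmgf : ∀ l : Fin d → ℝ, φ l ≠ ⊤ → ∀ ε : Fin d → ℝ, (∀ j, ε j = 1 ∨ ε j = -1) →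
      ∫⁻ ω, ENNReal.ofReal (Real.exp (∑ j, ε j * l j * ξ ω j)) ∂μ
        ≤ ENNReal.ofReal (Real.exp ((φ l).toReal))) :
    ∀ x : Fin d → ℝ, (∀ j, 0 ≤ x j) →
      tailFn μ ξ x ≤ Real.exp (-(legendreE φ x)) := by

  intro x hx
  apply Real.sSup_le
  · rintro t ⟨ε, hε, rfl⟩
    set A := {ω | ∀ j, x j < ε j * ξ ω j} with hA
    have hAmeas : MeasurableSet A := by
      have : A = ⋂ j, {ω | x j < ε j * ξ ω j} := by
        ext ω; simp [hA]
      rw [this]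
      exact MeasurableSet.iInter fun j =>
        measurableSet_lt measurable_const
          (measurable_const.mul ((measurable_pi_apply j).comp hmeas))
    have hAfin : μ A ≠ ⊤ := measure_ne_top μ A
    have ht1 : (μ A).toReal ≤ 1 := by
      simpa using ENNReal.toReal_mono ENNReal.one_ne_top (prob_le_one (μ := μ) (s := A))
    -- Chernov bound for nonnegative l
    have key : ∀ l : Fin d → ℝ, φ l ≠ ⊤ →
        (μ A).toReal ≤ Real.exp ((φ l).toReal - ∑ j, l j * x j) := by
      intro l hl
      set l' : Fin d → ℝ := fun j => |l j| with hl'def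
      set δ : Fin d → ℝ := fun j => if 0 ≤ l j then 1 else -1 with hδ
      have hδsign : ∀ j, δ j = 1 ∨ δ j = -1 := fun j => by
        by_cases h : 0 ≤ l j <;> simp [hδ, h]
      have hl'eq : l' = fun j => δ j * l j := by
        funext j
        by_cases h : 0 ≤ l j
        · simp [hl'def, hδ, h, abs_of_nonneg h]
        · simp [hl'def, hδ, h, abs_of_neg (lt_of_not_ge h)]
      have hφl' : φ l' = φ l := by rw [hl'eq]; exact heven δ hδsign l
      have hl'fin : φ l' ≠ ⊤ := hφl' ▸ hl
      set c := ∑ j, l' j * x j with hc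
      have hub : ENNReal.ofReal (Real.exp c) * μ A
          ≤ ENNReal.ofReal (Real.exp ((φ l').toReal)) := by
        calc ENNReal.ofReal (Real.exp c) * μ A
            = ∫⁻ _ω in A, ENNReal.ofReal (Real.exp c) ∂μ := by
              rw [setLIntegral_const]
          _ ≤ ∫⁻ ω in A, ENNReal.ofReal (Real.exp (∑ j, ε j * l' j * ξ ω j)) ∂μ := by
              apply setLIntegral_mono
              · apply Measurable.ennreal_ofReal
                apply Measurable.exp
                exact Finset.measurable_sum _ fun j _ =>
                  measurable_const.mul ((measurable_pi_apply j).comp hmeas)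
              · intro ω hω
                apply ENNReal.ofReal_le_ofReal
                apply Real.exp_le_exp.mpr
                rw [hc]
                apply Finset.sum_le_sum
                intro j _
                have h1 : ε j * l' j * ξ ω j = l' j * (ε j * ξ ω j) := by ring
                rw [h1]
                exact mul_le_mul_of_nonneg_left (le_of_lt (hω j)) (abs_nonneg _)
          _ ≤ ∫⁻ ω, ENNReal.ofReal (Real.exp (∑ j, ε j * l' j * ξ ω j)) ∂μ :=
              setLIntegral_le_lintegral _ _
          _ ≤ ENNReal.ofReal (Real.exp ((φ l').toReal)) := hmgf l' hl'fin ε hε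
      have hub' : Real.exp c * (μ A).toReal ≤ Real.exp ((φ l').toReal) := by
        have h1 : (ENNReal.ofReal (Real.exp c) * μ A).toReal
            ≤ (ENNReal.ofReal (Real.exp ((φ l').toReal))).toReal :=
          ENNReal.toReal_le_toReal (ENNReal.mul_ne_top ENNReal.ofReal_ne_top hAfin)
            ENNReal.ofReal_ne_top |>.mpr hub
        rwa [ENNReal.toReal_mul, ENNReal.toReal_ofReal (Real.exp_pos _).le,
          ENNReal.toReal_ofReal (Real.exp_pos _).le] at h1
      have hstep : (μ A).toReal ≤ Real.exp ((φ l').toReal - c) := by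
        rw [Real.exp_sub, le_div_iff₀ (Real.exp_pos c)]
        linarith [hub']
      refine hstep.trans ?_
      apply Real.exp_le_exp.mpr
      rw [hφl']
      have : ∑ j, l j * x j ≤ c := by
        rw [hc]
        exact Finset.sum_le_sum fun j _ =>
          mul_le_mul_of_nonneg_right (le_abs_self _) (hx j)
      linarith
    -- conclude
    rcases eq_or_lt_of_le (ENNReal.toReal_nonneg : (0:ℝ) ≤ (μ A).toReal) with h0 | h0
    · rw [← h0]; exact (Real.exp_pos _).le
    · have hlog : legendreE φ x ≤ -Real.log (μ A).toReal := by
        apply Real.sSup_le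
        · rintro s ⟨l, hl, rfl⟩
          have := key l hl
          have hlog2 : Real.log (μ A).toReal ≤ (φ l).toReal - ∑ j, l j * x j := by
            rw [← Real.log_exp ((φ l).toReal - ∑ j, l j * x j)]
            exact Real.log_le_log h0 this
          linarith
        · have : Real.log (μ A).toReal ≤ 0 := Real.log_nonpos (le_of_lt h0) ht1
          linarith
      calc (μ A).toReal = Real.exp (Real.log (μ A).toReal) := (Real.exp_log h0).symm
        _ ≤ Real.exp (-(legendreE φ x)) := Real.exp_le_exp.mpr (by linarith)
  · exact (Real.exp_pos _).le
end

section
/- Let φ : R^d → [0,∞] be finite on some neighborhood of the origin and coordinatewise even. Let ξ = (ξ(1),…,ξ(d)) be a centered random vector with ‖ξ‖B(φ) = τ ∈ (0,∞), i.e. for every λ ∈ R^d and every sign vector ε ∈ {−1,+1}^d, E exp(Σ_j ε(j)λ(j)ξ(j)) ≤ exp(φ(τλ)). Then for every y > 0, P( min_{j=1,…,d} |ξ(j)| > y ) ≤ 2^d · exp( −φ*(y/τ, y/τ, …, y/τ) ). -/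
open MeasureTheory Real ENNReal

/-!
Split the event `{∀ j, y < |ξ j|}` according to the signs of the coordinates into the `2 ^ d`
events `{∀ j, y < ε j * ξ j}`. For `φ x < ∞`, the exponential Chebyshev inequality applied with
the nonnegative weights `|x j| / τ` bounds each of them by `exp (φ x - ∑ j, x j * y / τ)`: the
signs of `x` can be absorbed into `ε` because the moment bound holds for every sign vector.
Taking the infimum over `x` gives `exp (-φ* (y / τ, …, y / τ))`.
-/

open Finset

section SignVectors

variable {ι : Type*}

def IsSignVector (ε : ι → ℝ) : Prop := ∀ j, ε j = 1 ∨ ε j = -1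

lemma IsSignVector.mul {ε ε' : ι → ℝ} (hε : IsSignVector ε) (hε' : IsSignVector ε') :
    IsSignVector (ε * ε') := fun j => by
  rcases hε j with h | h <;> rcases hε' j with h' | h' <;> simp [h, h']

/-- A `±1`-valued sign; unlike `SignType.sign` it sends `0` to `1`. -/
noncomputable def unitSign (v : ℝ) : ℝ := if 0 ≤ v then 1 else -1

lemma unitSign_mul_self (v : ℝ) : unitSign v * v = |v| := by
  unfold unitSign
  split_ifs with h
  · simp [abs_of_nonneg h]
  · simp [abs_of_neg (not_le.mp h)]

lemma isSignVector_unitSign (v : ι → ℝ) : IsSignVector fun j => unitSign (v j) := fun j => by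
  simp only [unitSign]
  split_ifs <;> simp

variable [Fintype ι] [DecidableEq ι]

variable (ι) in
noncomputable abbrev signVectors : Finset (ι → ℝ) := Fintype.piFinset fun _ => {1, -1}

lemma mem_signVectors {ε : ι → ℝ} : ε ∈ signVectors ι ↔ IsSignVector ε := by
  simp [IsSignVector]

lemma card_signVectors : (signVectors ι).card = 2 ^ Fintype.card ι := by
  simp [Fintype.card_piFinset, card_pair (by norm_num : (1 : ℝ) ≠ -1)]

lemma setOf_forall_lt_abs_subset_iUnion {Ω : Type*} (Z : Ω → ι → ℝ) (y : ℝ) :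
    {ω | ∀ j, y < |Z ω j|} ⊆ ⋃ ε ∈ signVectors ι, {ω | ∀ j, y < ε j * Z ω j} := by
  intro ω hω
  refine Set.mem_iUnion₂.2 ⟨fun j => unitSign (Z ω j),
    mem_signVectors.2 (isSignVector_unitSign _), fun j => ?_⟩
  rw [unitSign_mul_self]
  exact hω j

end SignVectors

section Chernoff

variable {ι Ω : Type*} [Fintype ι] [MeasurableSpace Ω] (μ : Measure Ω)

lemma measure_forall_lt_le_exp_mul_lintegral {Z : Ω → ι → ℝ} (hZ : Measurable Z)
    {a : ι → ℝ} (ha : ∀ j, 0 ≤ a j) (y : ℝ) :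
    μ {ω | ∀ j, y < Z ω j} ≤
      ENNReal.ofReal (exp (-(y * ∑ j, a j))) *
        ∫⁻ ω, ENNReal.ofReal (exp (∑ j, a j * Z ω j)) ∂μ := by
  set c := ENNReal.ofReal (exp (y * ∑ j, a j))
  have hmarkov : c * μ {ω | ∀ j, y < Z ω j} ≤
      ∫⁻ ω, ENNReal.ofReal (exp (∑ j, a j * Z ω j)) ∂μ := by
    refine le_trans (mul_le_mul_right (measure_mono fun ω hω => ?_) _)
      (mul_meas_ge_le_lintegral₀ (by fun_prop) c)
    refine ENNReal.ofReal_le_ofReal (exp_le_exp.2 ?_)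
    rw [mul_sum]
    exact sum_le_sum fun j _ => by
      rw [mul_comm]
      exact mul_le_mul_of_nonneg_left (le_of_lt (hω j)) (ha j)
  calc μ {ω | ∀ j, y < Z ω j}
      = ENNReal.ofReal (exp (-(y * ∑ j, a j))) * (c * μ {ω | ∀ j, y < Z ω j}) := by
        rw [← mul_assoc, ← ENNReal.ofReal_mul (exp_pos _).le, ← exp_add, neg_add_cancel,
          exp_zero, ENNReal.ofReal_one, one_mul]
    _ ≤ _ := by gcongr

end Chernoff

section MGFBound

variable {ι Ω : Type*} [Fintype ι] [MeasurableSpace Ω]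

/-- `ξ ∈ B(φ)` with `‖ξ‖B(φ) ≤ τ`, the moment bound being required only where `φ (τ • l) < ∞`. -/
def MGFBoundedBy (φ : (ι → ℝ) → ℝ≥0∞) (τ : ℝ) (μ : Measure Ω) (ξ : Ω → ι → ℝ) : Prop :=
  ∀ l ε : ι → ℝ, IsSignVector ε → φ (τ • l) ≠ ⊤ →
    ∫⁻ ω, ENNReal.ofReal (exp (∑ j, ε j * l j * ξ ω j)) ∂μ ≤
      ENNReal.ofReal (exp ((φ (τ • l)).toReal))

variable {φ : (ι → ℝ) → ℝ≥0∞} {τ : ℝ} {μ : Measure Ω} {ξ : Ω → ι → ℝ}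

lemma MGFBoundedBy.measure_forall_lt_sign_mul_le (hB : MGFBoundedBy φ τ μ ξ) (hτ : 0 < τ)
    (hξ : Measurable ξ) {ε : ι → ℝ} (hε : IsSignVector ε) {y : ℝ} (hy : 0 ≤ y)
    {x : ι → ℝ} (hx : φ x ≠ ⊤) :
    μ {ω | ∀ j, y < ε j * ξ ω j} ≤ ENNReal.ofReal (exp ((φ x).toReal - ∑ j, x j * (y / τ))) := by
  set a : ι → ℝ := fun j => |x j| / τ
  have hτx : τ • τ⁻¹ • x = x := smul_inv_smul₀ hτ.ne' x
  have hmgf := hB (τ⁻¹ • x) (ε * fun j => unitSign (x j)) (hε.mul (isSignVector_unitSign x))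
    (by rwa [hτx])
  rw [hτx] at hmgf
  have hfold : ∀ ω, ∑ j, a j * (ε j * ξ ω j) =
      ∑ j, (ε * fun j => unitSign (x j)) j * (τ⁻¹ • x) j * ξ ω j := fun ω =>
    sum_congr rfl fun j _ => by
      simp only [a, Pi.mul_apply, Pi.smul_apply, smul_eq_mul, ← unitSign_mul_self]
      ring
  have hweights : ∑ j, x j * (y / τ) ≤ y * ∑ j, a j := by
    rw [mul_sum]
    refine sum_le_sum fun j _ => ?_
    have : x j * (y / τ) ≤ |x j| * (y / τ) := by gcongr; exact le_abs_self _
    simpa [a, div_eq_mul_inv, mul_comm, mul_left_comm] using this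
  calc μ {ω | ∀ j, y < ε j * ξ ω j}
      ≤ ENNReal.ofReal (exp (-(y * ∑ j, a j))) *
          ∫⁻ ω, ENNReal.ofReal (exp (∑ j, a j * (ε j * ξ ω j))) ∂μ :=
        measure_forall_lt_le_exp_mul_lintegral μ (Z := fun ω j => ε j * ξ ω j) (by fun_prop)
          (fun j => div_nonneg (abs_nonneg _) hτ.le) y
    _ ≤ ENNReal.ofReal (exp (-(y * ∑ j, a j))) * ENNReal.ofReal (exp ((φ x).toReal)) := by
        simp only [hfold]
        gcongr
    _ = ENNReal.ofReal (exp ((φ x).toReal - y * ∑ j, a j)) := by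
        rw [← ENNReal.ofReal_mul (exp_pos _).le, ← exp_add, neg_add_eq_sub]
    _ ≤ _ := ENNReal.ofReal_le_ofReal (exp_le_exp.2 (by linarith))

lemma MGFBoundedBy.measure_forall_lt_abs_le [DecidableEq ι] (hB : MGFBoundedBy φ τ μ ξ)
    (hτ : 0 < τ) (hξ : Measurable ξ) {y : ℝ} (hy : 0 ≤ y) {x : ι → ℝ} (hx : φ x ≠ ⊤) :
    (μ {ω | ∀ j, y < |ξ ω j|}).toReal ≤
      2 ^ Fintype.card ι * exp ((φ x).toReal - ∑ j, x j * (y / τ)) := by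
  set E := ENNReal.ofReal (exp ((φ x).toReal - ∑ j, x j * (y / τ)))
  have hunion : μ {ω | ∀ j, y < |ξ ω j|} ≤ 2 ^ Fintype.card ι * E :=
    calc μ {ω | ∀ j, y < |ξ ω j|}
        ≤ μ (⋃ ε ∈ signVectors ι, {ω | ∀ j, y < ε j * ξ ω j}) :=
          measure_mono (setOf_forall_lt_abs_subset_iUnion ξ y)
      _ ≤ ∑ ε ∈ signVectors ι, μ {ω | ∀ j, y < ε j * ξ ω j} := measure_biUnion_finset_le _ _
      _ ≤ ∑ _ε ∈ signVectors ι, E := sum_le_sum fun ε hε =>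
          hB.measure_forall_lt_sign_mul_le hτ hξ (mem_signVectors.1 hε) hy hx
      _ = 2 ^ Fintype.card ι * E := by
          rw [sum_const, card_signVectors, nsmul_eq_mul, Nat.cast_pow, Nat.cast_ofNat]
  calc (μ {ω | ∀ j, y < |ξ ω j|}).toReal
      ≤ (2 ^ Fintype.card ι * E).toReal := ENNReal.toReal_mono (by finiteness) hunion
    _ = _ := by simp [E, ENNReal.toReal_ofReal (exp_pos _).le]

end MGFBound

-- `hpC` covers the junk value `sSup S = 0` of a set `S` that is not bounded above.
lemma le_mul_exp_neg_sSup {S : Set ℝ} {p C : ℝ} (hp : 0 ≤ p) (hpC : p ≤ C)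
    (h : ∀ t ∈ S, p ≤ C * exp (-t)) : p ≤ C * exp (-sSup S) := by
  rcases hp.eq_or_lt with rfl | hp
  · have : 0 ≤ C := hpC
    positivity
  have hC : 0 < C := hp.trans_le hpC
  have hsSup : sSup S ≤ log (C / p) := by
    refine Real.sSup_le (fun t ht => ?_) (log_nonneg ((one_le_div hp).2 hpC))
    rw [le_log_iff_exp_le (div_pos hC hp), le_div_iff₀ hp]
    calc exp t * p ≤ exp t * (C * exp (-t)) := by gcongr; exact h t ht
      _ = C := by rw [mul_left_comm, ← exp_add, add_neg_cancel, exp_zero, mul_one]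
  calc p = C * exp (-log (C / p)) := by
        rw [exp_neg, exp_log (div_pos hC hp), inv_div, mul_div_cancel₀ _ hC.ne']
    _ ≤ C * exp (-sSup S) := by gcongr

theorem stmt3_general {d : ℕ} (φ : (Fin d → ℝ) → ℝ≥0∞)
    {Ω : Type*} [MeasurableSpace Ω] (μ : Measure Ω) [IsProbabilityMeasure μ]
    (ξ : Ω → Fin d → ℝ) (hmeas : Measurable ξ)
    (τ : ℝ) (hτ : 0 < τ)
    (hmgf : ∀ l : Fin d → ℝ, ∀ ε : Fin d → ℝ, (∀ j, ε j = 1 ∨ ε j = -1) →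
      φ (τ • l) ≠ ⊤ →
      ∫⁻ ω, ENNReal.ofReal (Real.exp (∑ j, ε j * l j * ξ ω j)) ∂μ
        ≤ ENNReal.ofReal (Real.exp ((φ (τ • l)).toReal))) :
    ∀ y : ℝ, 0 < y →
      (μ {ω | ∀ j, y < |ξ ω j|}).toReal
        ≤ 2 ^ d * Real.exp (-(legendreE φ (fun _ => y / τ))) := by
  intro y hy
  have hB : MGFBoundedBy φ τ μ ξ := hmgf
  refine le_mul_exp_neg_sSup ENNReal.toReal_nonneg ?_ ?_
  · calc (μ {ω | ∀ j, y < |ξ ω j|}).toReal ≤ 1 := measureReal_le_one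
      _ ≤ 2 ^ d := one_le_pow₀ (by norm_num)
  · rintro t ⟨x, hx, rfl⟩
    simpa [neg_sub] using hB.measure_forall_lt_abs_le hτ hmeas hy.le hx

/-- Corollary 2.2: if `φ : ℝ^d → [0,∞]` is finite near the origin, coordinatewise
even, and the centered random vector `ξ` has `B(φ)`-norm `τ`, i.e.
`E exp(Σ_j ε(j)λ(j)ξ(j)) ≤ exp(φ(τλ))` for all `λ` and sign vectors `ε`, then
for every `y > 0`,
`P(min_j |ξ(j)| > y) ≤ 2^d exp(−φ*(y/τ, …, y/τ))`. -/
theorem stmt3 {d : ℕ} (φ : (Fin d → ℝ) → ℝ≥0∞)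
    (hfin : ∃ V ∈ nhds (0 : Fin d → ℝ), ∀ x ∈ V, φ x ≠ ⊤)
    (heven : ∀ ε : Fin d → ℝ, (∀ j, ε j = 1 ∨ ε j = -1) →
      ∀ l : Fin d → ℝ, φ (fun j => ε j * l j) = φ l)
    {Ω : Type*} [MeasurableSpace Ω] (μ : Measure Ω) [IsProbabilityMeasure μ]
    (ξ : Ω → Fin d → ℝ) (hmeas : Measurable ξ)
    (hcent : ∀ j, Integrable (fun ω => ξ ω j) μ ∧ ∫ ω, ξ ω j ∂μ = 0)
    (τ : ℝ) (hτ : 0 < τ)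
    (hmgf : ∀ l : Fin d → ℝ, ∀ ε : Fin d → ℝ, (∀ j, ε j = 1 ∨ ε j = -1) →
      φ (τ • l) ≠ ⊤ →
      ∫⁻ ω, ENNReal.ofReal (Real.exp (∑ j, ε j * l j * ξ ω j)) ∂μ
        ≤ ENNReal.ofReal (Real.exp ((φ (τ • l)).toReal))) :
    ∀ y : ℝ, 0 < y →
      (μ {ω | ∀ j, y < |ξ ω j|}).toReal
        ≤ 2 ^ d * Real.exp (-(legendreE φ (fun _ => y / τ))) :=
  stmt3_general φ μ ξ hmeas τ hτ hmgf
end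

section
/- Let φ : R → [0,∞) and let ξ be a centered real random variable with E exp(λξ) ≤ exp(φ(τλ)) and E exp(−λξ) ≤ exp(φ(τλ)) for all λ > 0, where τ ∈ (0,∞). Define Φ(μ) := φ(e^μ) for μ ∈ R and Φ*(r) := sup_{μ ∈ R} ( rμ − Φ(μ) ). Then for every r > 0, ( E|ξ|^r )^{1/r} ≤ 2^{1/r} · r · e^{−1} · exp( −Φ*(r)/r ) · τ. -/
open MeasureTheory Real ENNReal

lemma aux_pow_le (r l t : ℝ) (hr : 0 < r) (hl : 0 < l) (ht : 0 ≤ t) :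
    t ^ r ≤ (r / (Real.exp 1 * l)) ^ r * Real.exp (l * t) := by
  rcases eq_or_lt_of_le ht with h0 | h0
  · rw [← h0, Real.zero_rpow hr.ne']
    positivity
  · have hb : (0:ℝ) < r / (Real.exp 1 * l) := by positivity
    rw [← Real.log_le_log_iff (by positivity) (by positivity), Real.log_rpow h0,
      Real.log_mul (by positivity) (Real.exp_pos _).ne', Real.log_rpow hb, Real.log_exp,
      Real.log_div hr.ne' (by positivity), Real.log_mul (Real.exp_pos 1).ne' hl.ne',
      Real.log_exp]
    have key := Real.log_le_sub_one_of_pos (x := l * t / r) (by positivity)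
    have hlog : Real.log (l * t / r) = Real.log l + Real.log t - Real.log r := by
      rw [Real.log_div (by positivity) hr.ne', Real.log_mul hl.ne' h0.ne']
    rw [hlog] at key
    have h2 : r * (Real.log l + Real.log t - Real.log r) ≤ r * (l * t / r - 1) :=
      mul_le_mul_of_nonneg_left key hr.le
    have hrr : r * (l * t / r) = l * t := by field_simp
    nlinarith

lemma aux_abs_le (r l x : ℝ) (hr : 0 < r) (hl : 0 < l) :
    |x| ^ r ≤ (r / (Real.exp 1 * l)) ^ r *
      (Real.exp (l * x) + Real.exp (-(l * x))) := by
  have h1 := aux_pow_le r l |x| hr hl (abs_nonneg x)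
  have h2 : Real.exp (l * |x|) ≤ Real.exp (l * x) + Real.exp (-(l * x)) := by
    rcases abs_cases x with ⟨h, _⟩ | ⟨h, _⟩
    · rw [h]; nlinarith [Real.exp_pos (-(l*x))]
    · rw [h, mul_neg]
      nlinarith [Real.exp_pos (l*x)]
  calc |x| ^ r ≤ (r / (Real.exp 1 * l)) ^ r * Real.exp (l * |x|) := h1
    _ ≤ _ := by
      apply mul_le_mul_of_nonneg_left h2 (by positivity)

/-- Proposition 3.2: let `ξ` be a centered real random variable with
`E exp(±λξ) ≤ exp(φ(τλ))` for all `λ > 0`. With `Φ(μ) := φ(e^μ)` and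
`Φ*(r) := sup_μ (rμ − Φ(μ))`, one has
`(E|ξ|^r)^{1/r} ≤ 2^{1/r} · r · e^{−1} · exp(−Φ*(r)/r) · τ` for every `r > 0`. -/
theorem stmt7 (φ : ℝ → ℝ) (hφ : ∀ t, 0 ≤ φ t)
    {Ω : Type*} [MeasurableSpace Ω] (μ : Measure Ω) [IsProbabilityMeasure μ]
    (ξ : Ω → ℝ) (hmeas : Measurable ξ)
    (hint : Integrable ξ μ) (hcent : ∫ ω, ξ ω ∂μ = 0)
    (τ : ℝ) (hτ : 0 < τ)
    (hmgf : ∀ l : ℝ, 0 < l →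
      ∫⁻ ω, ENNReal.ofReal (Real.exp (l * ξ ω)) ∂μ
          ≤ ENNReal.ofReal (Real.exp (φ (τ * l))) ∧
      ∫⁻ ω, ENNReal.ofReal (Real.exp (-(l * ξ ω))) ∂μ
          ≤ ENNReal.ofReal (Real.exp (φ (τ * l)))) :
    ∀ r : ℝ, 0 < r →
      (∫⁻ ω, ENNReal.ofReal (|ξ ω| ^ r) ∂μ) ^ (1 / r)
        ≤ ENNReal.ofReal ((2 : ℝ) ^ (1 / r) * r * (Real.exp 1)⁻¹ *
            Real.exp (-(⨆ m : ℝ, (r * m - φ (Real.exp m))) / r) * τ) := by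
  intro r hr
  set f : ℝ → ℝ := fun m => r * m - φ (Real.exp m) with hf
  -- Step 1: for every m
  have key : ∀ m : ℝ,
      (∫⁻ ω, ENNReal.ofReal (|ξ ω| ^ r) ∂μ) ^ (1 / r)
        ≤ ENNReal.ofReal ((2 : ℝ) ^ (1 / r) * r * (Real.exp 1)⁻¹ *
            Real.exp (-(f m) / r) * τ) := by
    intro m
    set l : ℝ := Real.exp m / τ with hl0
    have hl : 0 < l := by positivity
    have hτl : τ * l = Real.exp m := by rw [hl0]; field_simp
    obtain ⟨h1, h2⟩ := hmgf l hl
    have hb : (0:ℝ) < r / (Real.exp 1 * l) := by positivity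
    have hB0 : (0:ℝ) ≤ Real.exp (φ (τ * l)) := (Real.exp_pos _).le
    have hint1 : (∫⁻ ω, ENNReal.ofReal (|ξ ω| ^ r) ∂μ)
        ≤ ENNReal.ofReal ((r / (Real.exp 1 * l)) ^ r *
            (Real.exp (φ (τ * l)) + Real.exp (φ (τ * l)))) := by
      calc (∫⁻ ω, ENNReal.ofReal (|ξ ω| ^ r) ∂μ)
          ≤ ∫⁻ ω, ENNReal.ofReal ((r / (Real.exp 1 * l)) ^ r) *
              (ENNReal.ofReal (Real.exp (l * ξ ω)) +
               ENNReal.ofReal (Real.exp (-(l * ξ ω)))) ∂μ := by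
            refine lintegral_mono fun ω => ?_
            rw [← ENNReal.ofReal_add (Real.exp_pos _).le (Real.exp_pos _).le,
              ← ENNReal.ofReal_mul (by positivity)]
            exact ENNReal.ofReal_le_ofReal (aux_abs_le r l (ξ ω) hr hl)
        _ = ENNReal.ofReal ((r / (Real.exp 1 * l)) ^ r) *
              ((∫⁻ ω, ENNReal.ofReal (Real.exp (l * ξ ω)) ∂μ) +
               (∫⁻ ω, ENNReal.ofReal (Real.exp (-(l * ξ ω))) ∂μ)) := by
            rw [lintegral_const_mul' _ _ ENNReal.ofReal_ne_top,
              lintegral_add_left ((hmeas.const_mul l).exp.ennreal_ofReal)]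
        _ ≤ ENNReal.ofReal ((r / (Real.exp 1 * l)) ^ r) *
              (ENNReal.ofReal (Real.exp (φ (τ * l))) +
               ENNReal.ofReal (Real.exp (φ (τ * l)))) :=
            mul_le_mul_right (add_le_add h1 h2) _
        _ = _ := by
            rw [← ENNReal.ofReal_add hB0 hB0, ← ENNReal.ofReal_mul (by positivity)]
    have hcomp : ((r / (Real.exp 1 * l)) ^ r *
            (Real.exp (φ (τ * l)) + Real.exp (φ (τ * l)))) ^ (1 / r)
        = (2 : ℝ) ^ (1 / r) * r * (Real.exp 1)⁻¹ * Real.exp (-(f m) / r) * τ := by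
      have e1 : Real.exp (φ (τ * l)) + Real.exp (φ (τ * l))
          = 2 * Real.exp (φ (τ * l)) := by ring
      rw [e1, Real.mul_rpow (by positivity) (by positivity),
        Real.mul_rpow (by norm_num) hB0,
        ← Real.rpow_mul hb.le, mul_one_div_cancel hr.ne', Real.rpow_one,
        ← Real.exp_mul]
      simp only [hf]
      rw [hτl, hl0]
      have e2 : -(r * m - φ (Real.exp m)) / r = -m + φ (Real.exp m) * (1 / r) := by
        field_simp
        ring
      rw [e2, Real.exp_add, Real.exp_neg]
      have h1 := Real.exp_ne_zero m
      have h2 := Real.exp_ne_zero 1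
      field_simp
    calc (∫⁻ ω, ENNReal.ofReal (|ξ ω| ^ r) ∂μ) ^ (1 / r)
        ≤ (ENNReal.ofReal ((r / (Real.exp 1 * l)) ^ r *
            (Real.exp (φ (τ * l)) + Real.exp (φ (τ * l))))) ^ (1 / r) :=
          ENNReal.rpow_le_rpow hint1 (by positivity)
      _ = ENNReal.ofReal (((r / (Real.exp 1 * l)) ^ r *
            (Real.exp (φ (τ * l)) + Real.exp (φ (τ * l)))) ^ (1 / r)) :=
          ENNReal.ofReal_rpow_of_nonneg (by positivity) (by positivity)
      _ = _ := by rw [hcomp]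
  -- Step 2
  by_cases hbdd : BddAbove (Set.range f)
  · have hanti : Antitone (fun x : ℝ => (2 : ℝ) ^ (1 / r) * r * (Real.exp 1)⁻¹ *
        Real.exp (-x / r) * τ) := by
      intro a b hab
      dsimp only
      have h1 : Real.exp (-b / r) ≤ Real.exp (-a / r) :=
        Real.exp_le_exp.mpr ((div_le_div_iff_of_pos_right hr).mpr (by linarith))
      have c0 : (0:ℝ) ≤ (2 : ℝ) ^ (1 / r) * r * (Real.exp 1)⁻¹ := by positivity
      exact mul_le_mul_of_nonneg_right (mul_le_mul_of_nonneg_left h1 c0) hτ.le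
    have hmap := hanti.map_ciSup_of_continuousAt
      (g := f) (Continuous.continuousAt (by continuity)) hbdd
    rw [hmap]
    have hmono : Monotone (ENNReal.ofReal) := fun a b h => ENNReal.ofReal_le_ofReal h
    have hbb : BddBelow (Set.range fun m => (2 : ℝ) ^ (1 / r) * r * (Real.exp 1)⁻¹ *
        Real.exp (-(f m) / r) * τ) := by
      refine ⟨0, ?_⟩
      rintro y ⟨m, rfl⟩
      positivity
    rw [hmono.map_ciInf_of_continuousAt ENNReal.continuous_ofReal.continuousAt hbb]
    exact le_iInf key
  · rw [Real.iSup_of_not_bddAbove hbdd]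
    obtain ⟨y, ⟨mval, rfl⟩, hy⟩ := not_bddAbove_iff.mp hbdd 0
    refine (key mval).trans (ENNReal.ofReal_le_ofReal ?_)
    have h1 : Real.exp (-(f mval) / r) ≤ Real.exp (-0 / r) :=
      Real.exp_le_exp.mpr ((div_le_div_iff_of_pos_right hr).mpr (by linarith))
    have c0 : (0:ℝ) ≤ (2 : ℝ) ^ (1 / r) * r * (Real.exp 1)⁻¹ := by positivity
    exact mul_le_mul_of_nonneg_right (mul_le_mul_of_nonneg_left h1 c0) hτ.le
end

section
/- Let φ : R → [0,∞] with Young–Fenchel transform φ*, and set Φ(z) := φ*(e^z) for z ∈ R and Φ*(p) := sup_{z ∈ R}(pz − Φ(z)). Let ξ be a real random variable such that E|ξ|^p ≤ exp(Φ*(p)) for every p ≥ 1. Then for every u > 1, P(|ξ| > u) ≤ exp( −sup_{p ≥ 1} ( p·log u − Φ*(p) ) ). In particular, if Φ is convex and continuous and the supremum defining Φ**(log u) = sup_{p ∈ R}(p·log u − Φ*(p)) is attained at some p ≥ 1, then P(|ξ| > u) ≤ exp(−φ*(u)). -/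
open MeasureTheory Real ENNReal

/-- Young–Fenchel (Legendre) transform of `φ : ℝ → [0,∞]`:
`φ*(y) = sup { xy − φ(x) : φ(x) < ∞ }`. -/
noncomputable def legendreE1 (φ : ℝ → ℝ≥0∞) (y : ℝ) : ℝ :=
  sSup { t | ∃ x : ℝ, φ x ≠ ⊤ ∧ t = x * y - (φ x).toReal }

/-- `Φ(z) := φ*(e^z)`. -/
noncomputable def PhiOf (φ : ℝ → ℝ≥0∞) (z : ℝ) : ℝ :=
  legendreE1 φ (Real.exp z)

/-- `Φ*(p) := sup_z (pz − Φ(z))`. -/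
noncomputable def PhiStarOf (φ : ℝ → ℝ≥0∞) (p : ℝ) : ℝ :=
  ⨆ z : ℝ, (p * z - PhiOf φ z)

/-- Existence of a subgradient for a convex function on `ℝ`. -/
theorem exists_subgrad_aux8 (f : ℝ → ℝ) (hf : ConvexOn ℝ Set.univ f) (z0 : ℝ) :
    ∃ s : ℝ, ∀ z, f z0 + s * (z - z0) ≤ f z := by
  set L : Set ℝ := {r | ∃ x, x < z0 ∧ r = (f z0 - f x) / (z0 - x)} with hL
  have hne : L.Nonempty := ⟨_, z0 - 1, by linarith, rfl⟩
  have hub : ∀ z, z0 < z → ∀ r ∈ L, r ≤ (f z - f z0) / (z - z0) := by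
    rintro z hz r ⟨x, hx, rfl⟩
    exact hf.slope_mono_adjacent trivial trivial hx hz
  have hbdd : BddAbove L := ⟨_, hub (z0 + 1) (by linarith)⟩
  refine ⟨sSup L, fun z => ?_⟩
  rcases lt_trichotomy z z0 with h | h | h
  · have hmem : (f z0 - f z) / (z0 - z) ∈ L := ⟨z, h, rfl⟩
    have := le_csSup hbdd hmem
    rw [div_le_iff₀ (by linarith)] at this
    nlinarith
  · simp [h]
  · have := csSup_le hne (hub z h)
    rw [le_div_iff₀ (by linarith)] at this
    nlinarith

/-- Chernoff/Markov step. -/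
theorem markov_step_aux8 (φ : ℝ → ℝ≥0∞)
    {Ω : Type*} [MeasurableSpace Ω] (μ : Measure Ω) [IsProbabilityMeasure μ]
    (ξ : Ω → ℝ) (hmeas : Measurable ξ)
    (hmom : ∀ p : ℝ, 1 ≤ p →
      ∫⁻ ω, ENNReal.ofReal (|ξ ω| ^ p) ∂μ
        ≤ ENNReal.ofReal (Real.exp (PhiStarOf φ p)))
    (p : ℝ) (hp : 1 ≤ p) (u : ℝ) (hu : 1 < u) :
    (μ {ω | u < |ξ ω|}).toReal
      ≤ Real.exp (-(p * Real.log u - PhiStarOf φ p)) := by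
  have hu0 : (0:ℝ) < u := by linarith
  have hup : (0:ℝ) < u ^ p := Real.rpow_pos_of_pos hu0 p
  have hsub : {ω | u < |ξ ω|} ⊆ {ω | ENNReal.ofReal (u ^ p) ≤ ENNReal.ofReal (|ξ ω| ^ p)} := by
    intro ω hω
    exact ENNReal.ofReal_le_ofReal
      (Real.rpow_le_rpow hu0.le (le_of_lt hω) (by linarith))
  have hmark := mul_meas_ge_le_lintegral₀
    (μ := μ) (f := fun ω => ENNReal.ofReal (|ξ ω| ^ p))
    ((hmeas.abs.pow_const p).ennreal_ofReal.aemeasurable) (ENNReal.ofReal (u ^ p))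
  have h1 : ENNReal.ofReal (u ^ p) * μ {ω | u < |ξ ω|}
      ≤ ENNReal.ofReal (Real.exp (PhiStarOf φ p)) :=
    le_trans (mul_le_mul_right (measure_mono hsub) _) (hmark.trans (hmom p hp))
  have h2 : μ {ω | u < |ξ ω|} ≤ ENNReal.ofReal (Real.exp (PhiStarOf φ p) / u ^ p) := by
    rw [ENNReal.ofReal_div_of_pos hup, ENNReal.le_div_iff_mul_le
      (Or.inl (by simpa using hup)) (Or.inl ENNReal.ofReal_ne_top), mul_comm]
    exact h1
  have h3 : Real.exp (PhiStarOf φ p) / u ^ p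
      = Real.exp (-(p * Real.log u - PhiStarOf φ p)) := by
    rw [Real.rpow_def_of_pos hu0, ← Real.exp_sub]
    ring_nf
  calc (μ {ω | u < |ξ ω|}).toReal
      ≤ (ENNReal.ofReal (Real.exp (PhiStarOf φ p) / u ^ p)).toReal :=
        ENNReal.toReal_mono ENNReal.ofReal_ne_top h2
    _ = Real.exp (PhiStarOf φ p) / u ^ p :=
        ENNReal.toReal_ofReal (by positivity)
    _ = _ := h3

/-- From moments back to tails: if `E|ξ|^p ≤ exp(Φ*(p))` for every `p ≥ 1`, then
`P(|ξ| > u) ≤ exp(−sup_{p ≥ 1}(p log u − Φ*(p)))` for `u > 1`; and if moreover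
`Φ` is convex and continuous and the supremum defining `Φ**(log u)` is attained
at some `p ≥ 1`, then `P(|ξ| > u) ≤ exp(−φ*(u))`. -/
theorem stmt8 (φ : ℝ → ℝ≥0∞) (hfin : ∃ x, φ x ≠ ⊤)
    {Ω : Type*} [MeasurableSpace Ω] (μ : Measure Ω) [IsProbabilityMeasure μ]
    (ξ : Ω → ℝ) (hmeas : Measurable ξ)
    (hmom : ∀ p : ℝ, 1 ≤ p →
      ∫⁻ ω, ENNReal.ofReal (|ξ ω| ^ p) ∂μ
        ≤ ENNReal.ofReal (Real.exp (PhiStarOf φ p))) :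
    (∀ u : ℝ, 1 < u →
      (μ {ω | u < |ξ ω|}).toReal
        ≤ Real.exp (-(sSup { t | ∃ p : ℝ, 1 ≤ p ∧
            t = p * Real.log u - PhiStarOf φ p }))) ∧
    (ConvexOn ℝ Set.univ (PhiOf φ) → Continuous (PhiOf φ) →
      ∀ u : ℝ, 1 < u →
        (∃ p : ℝ, 1 ≤ p ∧ ∀ q : ℝ,
            q * Real.log u - PhiStarOf φ q ≤ p * Real.log u - PhiStarOf φ p) →
        (μ {ω | u < |ξ ω|}).toReal ≤ Real.exp (-(legendreE1 φ u))) := by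
  constructor
  · intro u hu
    set T := { t | ∃ p : ℝ, 1 ≤ p ∧ t = p * Real.log u - PhiStarOf φ p } with hT
    have hbound : ∀ t ∈ T, (μ {ω | u < |ξ ω|}).toReal ≤ Real.exp (-t) := by
      rintro t ⟨p, hp, rfl⟩
      exact markov_step_aux8 φ μ ξ hmeas hmom p hp u hu
    by_cases hbdd : BddAbove T
    · set M := (μ {ω | u < |ξ ω|}).toReal with hM
      have hM0 : 0 ≤ M := ENNReal.toReal_nonneg
      rcases eq_or_lt_of_le hM0 with h0 | h0
      · rw [← h0]; positivity
      · have hTne : T.Nonempty := ⟨_, 1, le_refl 1, rfl⟩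
        have hle : sSup T ≤ -Real.log M := by
          apply csSup_le hTne
          intro t ht
          have := hbound t ht
          have hlog := Real.log_le_log h0 this
          rw [Real.log_exp] at hlog
          linarith
        calc M = Real.exp (Real.log M) := (Real.exp_log h0).symm
          _ ≤ Real.exp (-(sSup T)) := Real.exp_le_exp.mpr (by linarith)
    · rw [Real.sSup_of_not_bddAbove hbdd]
      simp only [neg_zero, Real.exp_zero]
      calc (μ {ω | u < |ξ ω|}).toReal ≤ (μ Set.univ).toReal :=
            ENNReal.toReal_mono (by simp) (measure_mono (Set.subset_univ _))
        _ = 1 := by simp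
  · rintro hconv _ u hu ⟨p, hp1, hpmax⟩
    have hu0 : (0:ℝ) < u := by linarith
    obtain ⟨s, hs⟩ := exists_subgrad_aux8 (PhiOf φ) hconv (Real.log u)
    -- Φ*(s) = s * log u - Φ(log u)
    have hbddg : ∀ z : ℝ, s * z - PhiOf φ z ≤ s * Real.log u - PhiOf φ (Real.log u) := by
      intro z
      have := hs z
      nlinarith
    have hstar : PhiStarOf φ s = s * Real.log u - PhiOf φ (Real.log u) := by
      apply le_antisymm
      · exact ciSup_le hbddg
      · refine le_ciSup (f := fun z => s * z - PhiOf φ z) ?_ (Real.log u)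
        refine ⟨s * Real.log u - PhiOf φ (Real.log u), ?_⟩
        rintro t ⟨z, rfl⟩
        exact hbddg z
    have hPhi : PhiOf φ (Real.log u) = legendreE1 φ u := by
      unfold PhiOf
      rw [Real.exp_log hu0]
    have hkey : legendreE1 φ u ≤ p * Real.log u - PhiStarOf φ p := by
      have := hpmax s
      rw [hstar, hPhi] at this
      linarith
    calc (μ {ω | u < |ξ ω|}).toReal
        ≤ Real.exp (-(p * Real.log u - PhiStarOf φ p)) :=
          markov_step_aux8 φ μ ξ hmeas hmom p hp1 u hu
      _ ≤ Real.exp (-(legendreE1 φ u)) := Real.exp_le_exp.mpr (by linarith)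
end

section
/- Let p > 1, q := p/(p−1), and C₁ > 0. Let φ be a Young–Orlicz function on R (d = 1) such that φ(λ) ≤ C₁|λ|^p for all |λ| > 1. Then there exists a finite constant C₂ depending only on p, C₁ and sup_{|λ| ≤ 1} φ(λ) such that every centered real random variable ξ with ‖ξ‖B(φ) < ∞ satisfies ( E|ξ|^r )^{1/r} ≤ C₂ · r^{1/q} · ‖ξ‖B(φ) for every r ≥ 1. -/
open MeasureTheory Real ENNReal

/-- A one-dimensional Young–Orlicz function: even, convex, nonnegative, twice
continuously differentiable, vanishing exactly at `0`, with `g''(0) > 0` and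
`|g'(x)| → ∞` as `|x| → ∞`. -/
structure IsYoungOrlicz1 (g : ℝ → ℝ) : Prop where
  even : ∀ x, g (-x) = g x
  convex : ConvexOn ℝ Set.univ g
  nonneg : ∀ x, 0 ≤ g x
  smooth : ContDiff ℝ 2 g
  zero_iff : ∀ x, g x = 0 ↔ x = 0
  second_deriv_pos : 0 < iteratedDeriv 2 g 0
  deriv_tendsto : Filter.Tendsto (fun x => |deriv g x|)
    (Filter.cocompact ℝ) Filter.atTop

/-!
A Chernoff-type estimate. From `t ^ r ≤ (r / λ) ^ r * exp (λ t)` and the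
bound on `E exp (±λ ξ)` one gets `‖ξ‖_r ≤ τ (r / m) (2 exp (φ m)) ^ (1 / r)` with
`m = τ λ`. Taking `m = max 1 ((r / C₁) ^ (1 / p))` makes `φ m ≤ max M r`, so the
second factor stays below `2 e ^ (M + 1)`, while `r / m ≤ C₁ ^ (1 / p) r ^ (1 - 1 / p)`.
-/

lemma rpow_le_rpow_div_mul_exp {lam t r : ℝ} (hlam : 0 < lam) (ht : 0 ≤ t) (hr : 0 < r) :
    t ^ r ≤ (r / lam) ^ r * Real.exp (lam * t) := by
  have hlin : lam * t / r ≤ Real.exp (lam * t / r) :=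
    le_trans (by linarith) (Real.add_one_le_exp _)
  calc t ^ r = (r / lam) ^ r * (lam * t / r) ^ r := by
        rw [← Real.mul_rpow (by positivity) (by positivity)]
        congr 1
        field_simp
    _ ≤ (r / lam) ^ r * Real.exp (lam * t / r) ^ r := by gcongr
    _ = (r / lam) ^ r * Real.exp (lam * t) := by
        rw [← Real.exp_mul, div_mul_cancel₀ _ hr.ne']

lemma lintegral_ofReal_abs_rpow_le {Ω : Type*} [MeasurableSpace Ω] {μ : Measure Ω}
    {ξ : Ω → ℝ} (hξ : AEMeasurable ξ μ) {lam r : ℝ} (hlam : 0 < lam) (hr : 0 < r)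
    {K : ℝ≥0∞} (hpos : ∫⁻ ω, ENNReal.ofReal (Real.exp (lam * ξ ω)) ∂μ ≤ K)
    (hneg : ∫⁻ ω, ENNReal.ofReal (Real.exp (-lam * ξ ω)) ∂μ ≤ K) :
    ∫⁻ ω, ENNReal.ofReal (|ξ ω| ^ r) ∂μ ≤ ENNReal.ofReal ((r / lam) ^ r) * (2 * K) := by
  have hpt : ∀ ω, ENNReal.ofReal (|ξ ω| ^ r) ≤ ENNReal.ofReal ((r / lam) ^ r) *
      (ENNReal.ofReal (Real.exp (lam * ξ ω)) + ENNReal.ofReal (Real.exp (-lam * ξ ω))) := by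
    intro ω
    have hexp : Real.exp (lam * |ξ ω|) ≤ Real.exp (lam * ξ ω) + Real.exp (-lam * ξ ω) := by
      simpa [abs_mul, abs_of_pos hlam] using Real.exp_abs_le (lam * ξ ω)
    rw [← ENNReal.ofReal_add (Real.exp_pos _).le (Real.exp_pos _).le,
      ← ENNReal.ofReal_mul (by positivity)]
    refine ENNReal.ofReal_le_ofReal ?_
    calc |ξ ω| ^ r ≤ (r / lam) ^ r * Real.exp (lam * |ξ ω|) :=
          rpow_le_rpow_div_mul_exp hlam (abs_nonneg _) hr
      _ ≤ _ := by gcongr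
  have hmeas : AEMeasurable (fun ω => ENNReal.ofReal (Real.exp (lam * ξ ω))) μ :=
    (Real.measurable_exp.comp_aemeasurable (hξ.const_mul lam)).ennreal_ofReal
  calc ∫⁻ ω, ENNReal.ofReal (|ξ ω| ^ r) ∂μ
      ≤ ∫⁻ ω, ENNReal.ofReal ((r / lam) ^ r) *
          (ENNReal.ofReal (Real.exp (lam * ξ ω)) + ENNReal.ofReal (Real.exp (-lam * ξ ω))) ∂μ :=
        lintegral_mono hpt
    _ = ENNReal.ofReal ((r / lam) ^ r) * ((∫⁻ ω, ENNReal.ofReal (Real.exp (lam * ξ ω)) ∂μ) +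
          ∫⁻ ω, ENNReal.ofReal (Real.exp (-lam * ξ ω)) ∂μ) := by
        rw [lintegral_const_mul' _ _ ENNReal.ofReal_ne_top, lintegral_add_left' hmeas]
    _ ≤ ENNReal.ofReal ((r / lam) ^ r) * (2 * K) := by
        rw [two_mul]
        gcongr

lemma lintegral_ofReal_abs_rpow_rpow_le_of_mgf_le {Ω : Type*} [MeasurableSpace Ω]
    {μ : Measure Ω} {ξ : Ω → ℝ} (hξ : AEMeasurable ξ μ) {φ : ℝ → ℝ}
    (heven : ∀ x, φ (-x) = φ x) {τ : ℝ} (hτ : 0 < τ)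
    (hmgf : ∀ l : ℝ, ∫⁻ ω, ENNReal.ofReal (Real.exp (l * ξ ω)) ∂μ
      ≤ ENNReal.ofReal (Real.exp (φ (τ * l))))
    {m r : ℝ} (hm : 0 < m) (hr : 0 < r) :
    (∫⁻ ω, ENNReal.ofReal (|ξ ω| ^ r) ∂μ) ^ (1 / r)
      ≤ ENNReal.ofReal (τ * (r / m) * (2 * Real.exp (φ m)) ^ (1 / r)) := by
  have hτm : τ * (m / τ) = m := mul_div_cancel₀ m hτ.ne'
  have hpos := hmgf (m / τ)
  have hneg := hmgf (-(m / τ))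
  rw [hτm] at hpos
  rw [mul_neg, hτm, heven] at hneg
  have hbound := lintegral_ofReal_abs_rpow_le hξ (div_pos hm hτ) hr hpos hneg
  rw [← ENNReal.ofReal_ofNat 2, ← ENNReal.ofReal_mul zero_le_two,
    ← ENNReal.ofReal_mul (by positivity)] at hbound
  calc (∫⁻ ω, ENNReal.ofReal (|ξ ω| ^ r) ∂μ) ^ (1 / r)
      ≤ ENNReal.ofReal ((r / (m / τ)) ^ r * (2 * Real.exp (φ m))) ^ (1 / r) := by
        gcongr
    _ = ENNReal.ofReal (τ * (r / m) * (2 * Real.exp (φ m)) ^ (1 / r)) := by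
        rw [ENNReal.ofReal_rpow_of_nonneg (by positivity) (by positivity),
          Real.mul_rpow (by positivity) (by positivity), ← Real.rpow_mul (by positivity),
          mul_one_div_cancel hr.ne', Real.rpow_one]
        congr 2
        field_simp

lemma apply_max_one_le {φ : ℝ → ℝ} {C₁ M p : ℝ}
    (hφ₁ : ∀ l : ℝ, 1 < |l| → φ l ≤ C₁ * |l| ^ p) (hφM : ∀ l : ℝ, |l| ≤ 1 → φ l ≤ M)
    (s : ℝ) : φ (max 1 s) ≤ max M (C₁ * s ^ p) := by
  rcases le_or_gt s 1 with hs | hs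
  · rw [max_eq_left hs]
    exact (hφM 1 (by norm_num)).trans (le_max_left _ _)
  · rw [max_eq_right hs.le]
    have hs' : |s| = s := abs_of_pos (one_pos.trans hs)
    exact (hs' ▸ hφ₁ s (hs'.symm ▸ hs)).trans (le_max_right _ _)

lemma two_mul_exp_rpow_one_div_le {a M r : ℝ} (hr : 1 ≤ r) (hM : 0 ≤ M) (ha : a ≤ max M r) :
    (2 * Real.exp a) ^ (1 / r) ≤ 2 * Real.exp (M + 1) := by
  have hr0 : 0 < r := one_pos.trans_le hr
  have hdiv : a * (1 / r) ≤ M + 1 := by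
    rw [mul_one_div, div_le_iff₀ hr0]
    have := max_le_add_of_nonneg hM hr0.le
    nlinarith
  rw [Real.mul_rpow zero_le_two (Real.exp_pos _).le, ← Real.exp_mul]
  gcongr
  exact Real.rpow_le_self_of_one_le one_le_two ((div_le_one hr0).mpr hr)

lemma div_max_one_rpow_le {r C p : ℝ} (hr : 0 < r) (hC : 0 < C) :
    r / max 1 ((r / C) ^ (1 / p)) ≤ C ^ (1 / p) * r ^ (1 - 1 / p) := by
  have hs : 0 < (r / C) ^ (1 / p) := by positivity
  calc r / max 1 ((r / C) ^ (1 / p)) ≤ r / (r / C) ^ (1 / p) :=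
        div_le_div_of_nonneg_left hr.le hs (le_max_right _ _)
    _ = C ^ (1 / p) * r ^ (1 - 1 / p) := by
        rw [Real.div_rpow hr.le hC.le, Real.rpow_sub hr, Real.rpow_one]
        field_simp

/-- Example 3.1 (direct part): let `p > 1`, `q = p/(p−1)`, `C₁ > 0`, `M ≥ 0`.
There is a constant `C₂ > 0` depending only on `p`, `C₁` and `M` such that for
every Young–Orlicz function `φ` on `ℝ` with `φ(λ) ≤ C₁|λ|^p` for `|λ| > 1` and
`sup_{|λ| ≤ 1} φ(λ) ≤ M`, every centered real random variable `ξ` with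
`E exp(λξ) ≤ exp(φ(τλ))` for all `λ` satisfies
`(E|ξ|^r)^{1/r} ≤ C₂ · r^{1/q} · τ` for every `r ≥ 1`. -/
theorem stmt15 (p : ℝ) (hp : 1 < p) (q : ℝ) (hq : q = p / (p - 1))
    (C₁ : ℝ) (hC₁ : 0 < C₁) (M : ℝ) (hM : 0 ≤ M) :
    ∃ C₂ : ℝ, 0 < C₂ ∧
      ∀ φ : ℝ → ℝ, IsYoungOrlicz1 φ →
        (∀ l : ℝ, 1 < |l| → φ l ≤ C₁ * |l| ^ p) →
        (∀ l : ℝ, |l| ≤ 1 → φ l ≤ M) →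
        ∀ (Ω : Type) (mΩ : MeasurableSpace Ω) (μ : Measure Ω),
          IsProbabilityMeasure μ → ∀ ξ : Ω → ℝ, Measurable ξ →
          Integrable ξ μ → (∫ ω, ξ ω ∂μ) = 0 →
          ∀ τ : ℝ, 0 < τ →
          (∀ l : ℝ, ∫⁻ ω, ENNReal.ofReal (Real.exp (l * ξ ω)) ∂μ
              ≤ ENNReal.ofReal (Real.exp (φ (τ * l)))) →
          ∀ r : ℝ, 1 ≤ r →
            (∫⁻ ω, ENNReal.ofReal (|ξ ω| ^ r) ∂μ) ^ (1 / r)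
              ≤ ENNReal.ofReal (C₂ * r ^ (1 / q) * τ) := by
  refine ⟨2 * Real.exp (M + 1) * C₁ ^ (1 / p), by positivity, ?_⟩
  intro φ hφ hφ₁ hφM Ω mΩ μ _ ξ hξ _ _ τ hτ hmgf r hr
  have hr0 : 0 < r := one_pos.trans_le hr
  have hp0 : p ≠ 0 := (one_pos.trans hp).ne'
  have hq' : 1 / q = 1 - 1 / p := by
    rw [hq]
    field_simp
  set m := max 1 ((r / C₁) ^ (1 / p))
  have hφm : φ m ≤ max M r := by
    have hpow : C₁ * ((r / C₁) ^ (1 / p)) ^ p = r := by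
      rw [← Real.rpow_mul (by positivity), one_div_mul_cancel hp0, Real.rpow_one]
      field_simp
    simpa only [hpow] using apply_max_one_le hφ₁ hφM ((r / C₁) ^ (1 / p))
  have hm : 0 < m := one_pos.trans_le (le_max_left _ _)
  refine (lintegral_ofReal_abs_rpow_rpow_le_of_mgf_le hξ.aemeasurable hφ.even hτ hmgf hm hr0).trans
    (ENNReal.ofReal_le_ofReal ?_)
  calc τ * (r / m) * (2 * Real.exp (φ m)) ^ (1 / r)
      ≤ τ * (C₁ ^ (1 / p) * r ^ (1 - 1 / p)) * (2 * Real.exp (M + 1)) := by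
        gcongr
        · exact div_max_one_rpow_le hr0 hC₁
        · exact two_mul_exp_rpow_one_div_le hr hM hφm
    _ = 2 * Real.exp (M + 1) * C₁ ^ (1 / p) * r ^ (1 / q) * τ := by
        rw [hq']
        ring
end

section
/- Let p > 1 and q := p/(p−1). Let ξ be a real random variable with E ξ = 0 such that ( E|ξ|^r )^{1/r} ≤ K · r^{1/q} for every r ≥ 1, where K ∈ (0,∞). Then there exists a finite constant C₃ depending only on p such that for every λ ∈ R, E exp(λξ) ≤ exp( C₃ · max( (K|λ|)^p, (K|λ|)² ) ); in particular ξ belongs to B(φ_p) for φ_p(λ) := max(|λ|^p, λ²) with ‖ξ‖B(φ_p) bounded by a constant (depending only on p) times K. -/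
/-!
Write `v = K|λ|`. If `e v ≤ 1/2`, use `exp x ≤ 1 + x + (exp |x| - 1 - |x|)`: the linear term has
mean zero, and the moment bound `E|ξ|^n ≤ (K n)^n` together with `n^n / n! ≤ e^n` dominates the
remaining series by `∑_{n ≥ 2} (e v)^n ≤ 2 (e v)^2`. If `e v > 1/2`, Young's inequality gives
`λ ξ ≤ ((2e)^{1/q} v)^p / p + |ξ|^q / (2 e q K^q)`; the variable `|ξ|^q` has moments
`E (|ξ|^q)^n ≤ (q K^q n)^n`, so the same series estimate bounds `E exp (|ξ|^q / (2 e q K^q))`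
by `2`, and `2 ≤ exp ((2 e v)^p)` absorbs that factor.
-/

open MeasureTheory Real ENNReal
open scoped Nat

lemma hasSum_pow_div_factorial_exp (x : ℝ) : HasSum (fun n ↦ x ^ n / n !) (exp x) := by
  rw [Real.exp_eq_exp_ℝ]
  exact NormedSpace.expSeries_div_hasSum_exp x

lemma hasSum_pow_add_two_div_factorial (x : ℝ) :
    HasSum (fun n ↦ x ^ (n + 2) / (n + 2)!) (exp x - 1 - x) := by
  have h := (hasSum_nat_add_iff' 2).2 (hasSum_pow_div_factorial_exp x)
  simpa [Finset.sum_range_succ, sub_sub] using h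

lemma exp_le_one_add_add_exp_abs_sub (x : ℝ) : exp x ≤ 1 + x + (exp |x| - 1 - |x|) := by
  rcases le_total 0 x with hx | hx
  · rw [abs_of_nonneg hx]; linarith
  · have h := sinh_le_self_iff.2 hx
    rw [sinh_eq, abs_of_nonpos hx] at *
    linarith

lemma pow_div_factorial_mul_pow_le {L t : ℝ} (hL : 0 ≤ L) (ht : 0 ≤ t) (n : ℕ) :
    t ^ n / n ! * (L * n) ^ n ≤ (exp 1 * L * t) ^ n := by
  have h := Real.pow_div_factorial_le_exp (n : ℝ) n.cast_nonneg n
  rw [← exp_one_pow] at h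
  calc t ^ n / n ! * (L * n) ^ n = (L * t) ^ n * ((n : ℝ) ^ n / n !) := by ring
    _ ≤ (L * t) ^ n * exp 1 ^ n := by gcongr
    _ = (exp 1 * L * t) ^ n := by ring

lemma tsum_ofReal_pow_add_le {a : ℝ} (ha : 0 ≤ a) (ha2 : a ≤ 1 / 2) (k : ℕ) :
    ∑' n, ENNReal.ofReal (a ^ (n + k)) ≤ ENNReal.ofReal (2 * a ^ k) := by
  have hsum : HasSum (fun n ↦ a ^ (n + k)) (a ^ k * (1 - a)⁻¹) := by
    simpa [pow_add, mul_comm] using (hasSum_geometric_of_lt_one ha (by linarith)).mul_left (a ^ k)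
  rw [← ENNReal.ofReal_tsum_of_nonneg (fun n ↦ by positivity) hsum.summable, hsum.tsum_eq,
    mul_comm 2]
  gcongr
  rw [inv_le_comm₀ (by linarith) two_pos]
  linarith

lemma mul_le_rpow_div_add_rpow_div {p q : ℝ} (hpq : p.HolderConjugate q) {c : ℝ} (hc : 0 < c)
    (x y : ℝ) : x * y ≤ (c * |x|) ^ p / p + (|y| / c) ^ q / q :=
  calc x * y ≤ |x| * |y| := by rw [← abs_mul]; exact le_abs_self _
    _ = (c * |x|) * (|y| / c) := by field_simp
    _ ≤ _ := young_inequality_of_nonneg (by positivity) (by positivity) hpq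

noncomputable def mgfConst (p : ℝ) : ℝ := 2 * exp 1 ^ 2 + 2 * (2 * exp 1) ^ p

lemma one_le_mgfConst (p : ℝ) : 1 ≤ mgfConst p := by
  have h2e : 0 ≤ 2 * (2 * exp 1) ^ p := by positivity
  have he : 1 ≤ exp 1 ^ 2 := one_le_pow₀ (one_le_exp zero_le_one)
  unfold mgfConst
  linarith

lemma one_add_two_mul_sq_le_exp_mgfConst (p v : ℝ) :
    1 + 2 * (exp 1 * v) ^ 2 ≤ exp (mgfConst p * max (v ^ p) (v ^ 2)) := by
  have hC : 2 * exp 1 ^ 2 ≤ mgfConst p := le_add_of_nonneg_right (by positivity)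
  calc 1 + 2 * (exp 1 * v) ^ 2 ≤ exp (2 * exp 1 ^ 2 * v ^ 2) := by
        rw [mul_pow]
        linarith [add_one_le_exp (2 * exp 1 ^ 2 * v ^ 2)]
    _ ≤ exp (mgfConst p * max (v ^ p) (v ^ 2)) :=
        exp_le_exp.2 <| mul_le_mul hC (le_max_right _ _) (sq_nonneg v)
          (zero_le_one.trans (one_le_mgfConst p))

lemma two_mul_exp_le_exp_mgfConst {p q v : ℝ} (hp : 1 ≤ p) (hq : 1 ≤ q) (hv : 1 / 2 < exp 1 * v) :
    2 * exp (((2 * exp 1) ^ (1 / q) * v) ^ p / p) ≤ exp (mgfConst p * max (v ^ p) (v ^ 2)) := by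
  have hv0 : 0 ≤ v := (pos_of_mul_pos_right (by linarith) (exp_pos 1).le).le
  have h2ev : 1 ≤ 2 * exp 1 * v := by linarith
  have hroot : (2 * exp 1) ^ (1 / q) ≤ 2 * exp 1 := by
    calc (2 * exp 1) ^ (1 / q) ≤ (2 * exp 1) ^ (1 : ℝ) :=
          rpow_le_rpow_of_exponent_le (by linarith [add_one_le_exp 1])
            ((div_le_one (by linarith)).2 hq)
      _ = 2 * exp 1 := Real.rpow_one _
  have hT : ((2 * exp 1) ^ (1 / q) * v) ^ p / p ≤ (2 * exp 1 * v) ^ p :=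
    (div_le_self (by positivity) hp).trans
      (rpow_le_rpow (by positivity) (mul_le_mul_of_nonneg_right hroot hv0) (by linarith))
  have hlog : Real.log 2 ≤ (2 * exp 1 * v) ^ p :=
    (log_two_lt_d9.le.trans (by norm_num)).trans (one_le_rpow h2ev (by linarith))
  have hC : 2 * (2 * exp 1) ^ p ≤ mgfConst p := le_add_of_nonneg_left (by positivity)
  calc 2 * exp (((2 * exp 1) ^ (1 / q) * v) ^ p / p)
      = exp (Real.log 2 + ((2 * exp 1) ^ (1 / q) * v) ^ p / p) := by
        rw [exp_add, exp_log two_pos]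
    _ ≤ exp (2 * (2 * exp 1) ^ p * v ^ p) := by
        rw [exp_le_exp, mul_assoc, ← mul_rpow (by positivity) hv0]
        linarith
    _ ≤ exp (mgfConst p * max (v ^ p) (v ^ 2)) :=
        exp_le_exp.2 <| mul_le_mul hC (le_max_left _ _) (by positivity)
          (zero_le_one.trans (one_le_mgfConst p))

lemma mul_max_rpow_sq_le {C p v : ℝ} (hC : 1 ≤ C) (hp : 1 ≤ p) (hv : 0 ≤ v) :
    C * max (v ^ p) (v ^ 2) ≤ max ((C * v) ^ p) ((C * v) ^ 2) := by
  rw [mul_max_of_nonneg _ _ (by linarith), mul_rpow (by linarith) hv, mul_pow]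
  apply max_le_max
  · gcongr
    calc C = C ^ (1 : ℝ) := (Real.rpow_one C).symm
      _ ≤ C ^ p := rpow_le_rpow_of_exponent_le hC hp
  · gcongr
    nlinarith

section Moments

variable {Ω : Type*} [MeasurableSpace Ω] {μ : Measure Ω}

theorem lintegral_expSeries_tail_le {η : Ω → ℝ} (hη : Measurable η) {L t : ℝ} (hL : 0 ≤ L)
    (ht : 0 ≤ t) (hLt : exp 1 * L * t ≤ 1 / 2) (k : ℕ)
    (hmom : ∀ n, k ≤ n → ∫⁻ ω, ENNReal.ofReal (|η ω| ^ n) ∂μ ≤ ENNReal.ofReal ((L * n) ^ n)) :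
    ∫⁻ ω, ENNReal.ofReal (∑' n, (t * |η ω|) ^ (n + k) / (n + k)!) ∂μ
      ≤ ENNReal.ofReal (2 * (exp 1 * L * t) ^ k) := by
  have hterm (n : ℕ) : ∫⁻ ω, ENNReal.ofReal ((t * |η ω|) ^ (n + k) / (n + k)!) ∂μ
      ≤ ENNReal.ofReal ((exp 1 * L * t) ^ (n + k)) := by
    have hc : 0 ≤ t ^ (n + k) / (n + k)! := by positivity
    calc ∫⁻ ω, ENNReal.ofReal ((t * |η ω|) ^ (n + k) / (n + k)!) ∂μ
        = ENNReal.ofReal (t ^ (n + k) / (n + k)!) * ∫⁻ ω, ENNReal.ofReal (|η ω| ^ (n + k)) ∂μ := by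
          rw [← lintegral_const_mul _ (by fun_prop)]
          congr 1 with ω
          rw [← ENNReal.ofReal_mul hc]
          ring_nf
      _ ≤ ENNReal.ofReal (t ^ (n + k) / (n + k)!) * ENNReal.ofReal ((L * ↑(n + k)) ^ (n + k)) := by
          gcongr
          exact hmom _ (Nat.le_add_left k n)
      _ ≤ ENNReal.ofReal ((exp 1 * L * t) ^ (n + k)) := by
          rw [← ENNReal.ofReal_mul hc]
          exact ENNReal.ofReal_le_ofReal (pow_div_factorial_mul_pow_le hL ht _)
  have hseries (ω : Ω) : ENNReal.ofReal (∑' n, (t * |η ω|) ^ (n + k) / (n + k)!)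
      = ∑' n, ENNReal.ofReal ((t * |η ω|) ^ (n + k) / (n + k)!) :=
    ENNReal.ofReal_tsum_of_nonneg (fun n ↦ by positivity)
      ((summable_nat_add_iff k).2 (hasSum_pow_div_factorial_exp _).summable)
  simp_rw [hseries]
  rw [lintegral_tsum (fun n ↦ by fun_prop)]
  exact (ENNReal.tsum_le_tsum hterm).trans (tsum_ofReal_pow_add_le (by positivity) hLt k)

theorem lintegral_exp_mul_le_one_add_sq [IsProbabilityMeasure μ] {ξ : Ω → ℝ} (hξ : Measurable ξ)
    (hint : Integrable ξ μ) (hmean : ∫ ω, ξ ω ∂μ = 0) {K l : ℝ} (hK : 0 ≤ K)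
    (hsmall : exp 1 * K * |l| ≤ 1 / 2)
    (hmom : ∀ n : ℕ, 2 ≤ n → ∫⁻ ω, ENNReal.ofReal (|ξ ω| ^ n) ∂μ ≤ ENNReal.ofReal ((K * n) ^ n)) :
    ∫⁻ ω, ENNReal.ofReal (exp (l * ξ ω)) ∂μ ≤ ENNReal.ofReal (1 + 2 * (exp 1 * K * |l|) ^ 2) := by
  set g : Ω → ℝ := fun ω ↦ exp |l * ξ ω| - 1 - |l * ξ ω| with hg
  have hg_nonneg : 0 ≤ g := fun ω ↦ by
    simp only [hg, Pi.zero_apply]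
    linarith [add_one_le_exp |l * ξ ω|]
  have hg_lintegral :
      ∫⁻ ω, ENNReal.ofReal (g ω) ∂μ ≤ ENNReal.ofReal (2 * (exp 1 * K * |l|) ^ 2) := by
    have hg_series (ω : Ω) : g ω = ∑' n, (|l| * |ξ ω|) ^ (n + 2) / (n + 2)! := by
      rw [← abs_mul, (hasSum_pow_add_two_div_factorial _).tsum_eq]
    simp_rw [hg_series]
    exact lintegral_expSeries_tail_le hξ hK (abs_nonneg l) hsmall 2 hmom
  have hg_int : Integrable g μ :=
    ⟨by fun_prop, (hasFiniteIntegral_iff_ofReal (.of_forall hg_nonneg)).2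
      (hg_lintegral.trans_lt ofReal_lt_top)⟩
  have hg_integral : ∫ ω, g ω ∂μ ≤ 2 * (exp 1 * K * |l|) ^ 2 := by
    rwa [← ENNReal.ofReal_le_ofReal_iff (by positivity),
      ofReal_integral_eq_lintegral_ofReal hg_int (.of_forall hg_nonneg)]
  have hmaj_int : Integrable (fun ω ↦ 1 + l * ξ ω + g ω) μ :=
    ((integrable_const 1).add (hint.const_mul l)).add hg_int
  have hmaj_nonneg : 0 ≤ fun ω ↦ 1 + l * ξ ω + g ω := fun ω ↦
    (exp_pos _).le.trans (exp_le_one_add_add_exp_abs_sub _)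
  calc ∫⁻ ω, ENNReal.ofReal (exp (l * ξ ω)) ∂μ
      ≤ ∫⁻ ω, ENNReal.ofReal (1 + l * ξ ω + g ω) ∂μ :=
        lintegral_mono fun ω ↦ ENNReal.ofReal_le_ofReal (exp_le_one_add_add_exp_abs_sub _)
    _ = ENNReal.ofReal (1 + ∫ ω, g ω ∂μ) := by
        rw [← ofReal_integral_eq_lintegral_ofReal hmaj_int (.of_forall hmaj_nonneg),
          integral_add (f := fun ω ↦ 1 + l * ξ ω) ((integrable_const 1).add (hint.const_mul l))
            hg_int,
          integral_add (integrable_const 1) (hint.const_mul l), integral_const_mul, hmean]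
        simp
    _ ≤ ENNReal.ofReal (1 + 2 * (exp 1 * K * |l|) ^ 2) := by gcongr

theorem lintegral_exp_abs_rpow_le_two [IsProbabilityMeasure μ] {ξ : Ω → ℝ} (hξ : Measurable ξ)
    {q K : ℝ} (hq : 1 ≤ q) (hK : 0 < K)
    (hmom : ∀ r : ℝ, 1 ≤ r →
      ∫⁻ ω, ENNReal.ofReal (|ξ ω| ^ r) ∂μ ≤ ENNReal.ofReal ((K * r ^ (1 / q)) ^ r)) :
    ∫⁻ ω, ENNReal.ofReal (exp (|ξ ω| ^ q / (2 * exp 1 * q * K ^ q))) ∂μ ≤ 2 := by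
  have hq0 : 0 < q := by linarith
  have hmom_pow (n : ℕ) (_ : 0 ≤ n) : ∫⁻ ω, ENNReal.ofReal (|(|ξ ω| ^ q)| ^ n) ∂μ
      ≤ ENNReal.ofReal ((q * K ^ q * n) ^ n) := by
    rcases Nat.eq_zero_or_pos n with rfl | hn
    · simp
    have hpow (ω : Ω) : |(|ξ ω| ^ q)| ^ n = |ξ ω| ^ (q * n) := by
      rw [abs_of_nonneg (by positivity), ← Real.rpow_natCast, ← rpow_mul (abs_nonneg _)]
    have hbound : (K * (q * n) ^ (1 / q)) ^ (q * n) = (q * K ^ q * n) ^ n := by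
      have hexp : 1 / q * (q * n) = n := by field_simp
      rw [mul_rpow hK.le (by positivity), ← rpow_mul (by positivity), hexp, rpow_mul hK.le,
        Real.rpow_natCast, Real.rpow_natCast, ← mul_pow]
      ring
    simp_rw [hpow, ← hbound]
    exact hmom _ (one_le_mul_of_one_le_of_one_le hq (by exact_mod_cast hn))
  have h := lintegral_expSeries_tail_le (hξ.abs.pow_const q) (by positivity)
    (t := (2 * exp 1 * q * K ^ q)⁻¹) (by positivity) (le_of_eq (by field_simp)) 0 hmom_pow
  simp_rw [add_zero, (hasSum_pow_div_factorial_exp _).tsum_eq] at h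
  simp only [pow_zero, mul_one, ENNReal.ofReal_ofNat] at h
  convert h using 4 with ω
  rw [abs_of_nonneg (rpow_nonneg (abs_nonneg (ξ ω)) q), div_eq_inv_mul]

theorem lintegral_exp_mul_le_two_mul_exp [IsProbabilityMeasure μ] {p q : ℝ}
    (hpq : p.HolderConjugate q) {ξ : Ω → ℝ} (hξ : Measurable ξ) {K : ℝ} (hK : 0 < K)
    (hmom : ∀ r : ℝ, 1 ≤ r →
      ∫⁻ ω, ENNReal.ofReal (|ξ ω| ^ r) ∂μ ≤ ENNReal.ofReal ((K * r ^ (1 / q)) ^ r)) (l : ℝ) :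
    ∫⁻ ω, ENNReal.ofReal (exp (l * ξ ω)) ∂μ
      ≤ ENNReal.ofReal (2 * exp (((2 * exp 1) ^ (1 / q) * K * |l|) ^ p / p)) := by
  have hq0 : 0 < q := hpq.symm.pos
  set c := (2 * exp 1) ^ (1 / q) * K with hc_def
  have hc : 0 < c := by positivity
  have hcq : c ^ q = 2 * exp 1 * K ^ q := by
    rw [hc_def, mul_rpow (by positivity) hK.le, ← rpow_mul (by positivity),
      one_div_mul_cancel hq0.ne', Real.rpow_one]
  set T := (c * |l|) ^ p / p
  have hyoung (ω : Ω) : exp (l * ξ ω) ≤ exp T * exp (|ξ ω| ^ q / (2 * exp 1 * q * K ^ q)) := by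
    rw [← exp_add, exp_le_exp]
    calc l * ξ ω ≤ (c * |l|) ^ p / p + (|ξ ω| / c) ^ q / q :=
          mul_le_rpow_div_add_rpow_div hpq hc _ _
      _ = T + |ξ ω| ^ q / (2 * exp 1 * q * K ^ q) := by
        rw [div_rpow (abs_nonneg _) hc.le, hcq, div_div]
        ring
  calc ∫⁻ ω, ENNReal.ofReal (exp (l * ξ ω)) ∂μ
      ≤ ∫⁻ ω, ENNReal.ofReal (exp T) *
          ENNReal.ofReal (exp (|ξ ω| ^ q / (2 * exp 1 * q * K ^ q))) ∂μ :=
        lintegral_mono fun ω ↦ by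
          rw [← ENNReal.ofReal_mul (exp_pos _).le]
          exact ENNReal.ofReal_le_ofReal (hyoung ω)
    _ = ENNReal.ofReal (exp T) *
          ∫⁻ ω, ENNReal.ofReal (exp (|ξ ω| ^ q / (2 * exp 1 * q * K ^ q))) ∂μ :=
        lintegral_const_mul _ (by fun_prop)
    _ ≤ ENNReal.ofReal (exp T) * 2 := by
        gcongr
        exact lintegral_exp_abs_rpow_le_two hξ hpq.symm.lt.le hK hmom
    _ = ENNReal.ofReal (2 * exp T) := by
        rw [ENNReal.ofReal_mul zero_le_two, ENNReal.ofReal_ofNat, mul_comm]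

lemma lintegral_abs_pow_le_of_rpow_moment_le {ξ : Ω → ℝ} {K q : ℝ} (hK : 0 ≤ K) (hq : 1 ≤ q)
    (hmom : ∀ r : ℝ, 1 ≤ r →
      ∫⁻ ω, ENNReal.ofReal (|ξ ω| ^ r) ∂μ ≤ ENNReal.ofReal ((K * r ^ (1 / q)) ^ r))
    (n : ℕ) (hn : 1 ≤ n) :
    ∫⁻ ω, ENNReal.ofReal (|ξ ω| ^ n) ∂μ ≤ ENNReal.ofReal ((K * n) ^ n) := by
  have hn' : (1 : ℝ) ≤ n := by exact_mod_cast hn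
  have hroot : (n : ℝ) ^ (1 / q) ≤ n := by
    calc (n : ℝ) ^ (1 / q) ≤ (n : ℝ) ^ (1 : ℝ) :=
          rpow_le_rpow_of_exponent_le hn' ((div_le_one (by linarith)).2 hq)
      _ = n := Real.rpow_one _
  calc ∫⁻ ω, ENNReal.ofReal (|ξ ω| ^ n) ∂μ ≤ ENNReal.ofReal ((K * (n : ℝ) ^ (1 / q)) ^ n) := by
        simpa only [Real.rpow_natCast] using hmom n hn'
    _ ≤ ENNReal.ofReal ((K * n) ^ n) := by gcongr

theorem lintegral_exp_mul_le_exp_mgfConst [IsProbabilityMeasure μ] {p q : ℝ}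
    (hpq : p.HolderConjugate q) {ξ : Ω → ℝ} (hξ : Measurable ξ) (hint : Integrable ξ μ)
    (hmean : ∫ ω, ξ ω ∂μ = 0) {K : ℝ} (hK : 0 < K)
    (hmom : ∀ r : ℝ, 1 ≤ r →
      ∫⁻ ω, ENNReal.ofReal (|ξ ω| ^ r) ∂μ ≤ ENNReal.ofReal ((K * r ^ (1 / q)) ^ r)) (l : ℝ) :
    ∫⁻ ω, ENNReal.ofReal (exp (l * ξ ω)) ∂μ
      ≤ ENNReal.ofReal (exp (mgfConst p * max ((K * |l|) ^ p) ((K * |l|) ^ 2))) := by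
  rcases le_or_gt (exp 1 * (K * |l|)) (1 / 2) with hsmall | hlarge
  · refine (lintegral_exp_mul_le_one_add_sq hξ hint hmean hK.le (by rwa [mul_assoc]) fun n hn ↦
      lintegral_abs_pow_le_of_rpow_moment_le hK.le hpq.symm.lt.le hmom n (by omega)).trans ?_
    rw [mul_assoc]
    exact ENNReal.ofReal_le_ofReal (one_add_two_mul_sq_le_exp_mgfConst p _)
  · refine (lintegral_exp_mul_le_two_mul_exp hpq hξ hK hmom l).trans (ENNReal.ofReal_le_ofReal ?_)
    rw [mul_assoc]
    exact two_mul_exp_le_exp_mgfConst hpq.lt.le hpq.symm.lt.le hlarge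

end Moments

/-- Example 3.1 (inverse part): let `p > 1`, `q = p/(p−1)`. There are constants
`C₃, C' > 0` depending only on `p` such that every centered real random
variable `ξ` with `(E|ξ|^r)^{1/r} ≤ K r^{1/q}` for all `r ≥ 1` satisfies, for
every `λ ∈ ℝ`, `E exp(λξ) ≤ exp(C₃ max((K|λ|)^p, (K|λ|)²))`; in particular `ξ`
belongs to `B(φ_p)` for `φ_p(λ) = max(|λ|^p, λ²)` with norm at most `C'·K`. -/
theorem stmt16 (p : ℝ) (hp : 1 < p) (q : ℝ) (hq : q = p / (p - 1)) :
    ∃ C₃ C' : ℝ, 0 < C₃ ∧ 0 < C' ∧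
      ∀ (Ω : Type) (mΩ : MeasurableSpace Ω) (μ : Measure Ω),
        IsProbabilityMeasure μ → ∀ ξ : Ω → ℝ, Measurable ξ →
        Integrable ξ μ → (∫ ω, ξ ω ∂μ) = 0 →
        ∀ K : ℝ, 0 < K →
        (∀ r : ℝ, 1 ≤ r →
          (∫⁻ ω, ENNReal.ofReal (|ξ ω| ^ r) ∂μ) ^ (1 / r)
            ≤ ENNReal.ofReal (K * r ^ (1 / q))) →
        ∀ l : ℝ,
          (∫⁻ ω, ENNReal.ofReal (Real.exp (l * ξ ω)) ∂μ
            ≤ ENNReal.ofReal (Real.exp (C₃ * max ((K * |l|) ^ p) ((K * |l|) ^ 2))))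
          ∧
          (∫⁻ ω, ENNReal.ofReal (Real.exp (l * ξ ω)) ∂μ
            ≤ ENNReal.ofReal (Real.exp (max (|C' * K * l| ^ p) ((C' * K * l) ^ 2)))) := by
  have hpq : p.HolderConjugate q := (holderConjugate_iff_eq_conjExponent hp).2 hq
  have hC := one_le_mgfConst p
  refine ⟨mgfConst p, mgfConst p, by linarith, by linarith, ?_⟩
  intro Ω _ μ _ ξ hξ hint hmean K hK hnorm l
  have hmom (r : ℝ) (hr : 1 ≤ r) :
      ∫⁻ ω, ENNReal.ofReal (|ξ ω| ^ r) ∂μ ≤ ENNReal.ofReal ((K * r ^ (1 / q)) ^ r) := by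
    have h := hnorm r hr
    rwa [one_div r, ENNReal.rpow_inv_le_iff (by linarith),
      ENNReal.ofReal_rpow_of_nonneg (by positivity) (by linarith)] at h
  have hbound := lintegral_exp_mul_le_exp_mgfConst hpq hξ hint hmean hK hmom l
  refine ⟨hbound, hbound.trans (ENNReal.ofReal_le_ofReal (exp_le_exp.2 ?_))⟩
  have habs : |mgfConst p * K * l| = mgfConst p * (K * |l|) := by
    rw [abs_mul, abs_mul, abs_of_pos (by linarith), abs_of_pos hK, mul_assoc]
  rw [← sq_abs (mgfConst p * K * l), habs]
  exact mul_max_rpow_sq_le hC hp.le (by positivity)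
end

section
/- Let K, C₄ ∈ (0,∞) and let ξ be a centered real random variable such that E exp(λξ) ≤ exp( C₄/(K − |λ|) ) for every λ ∈ R with |λ| < K. Then there exists a finite constant C₅ depending only on the ratio C₄/K such that ( E|ξ|^r )^{1/r} ≤ C₅ · r / K for every r ≥ 1. -/
open MeasureTheory Real ENNReal

/-!
With `s = K / 2` the hypothesis bounds both `E exp(sξ)` and `E exp(-sξ)` by `exp(2C₄/K)`.
From `y ≤ exp(y - 1)` one gets `x ^ r ≤ (r / (e s)) ^ r · exp(s x)` for `x ≥ 0`, and
`exp(s|x|) ≤ exp(sx) + exp(-sx)`, so `E|ξ|^r ≤ (2r / (eK)) ^ r · 2 exp(2C₄/K)`.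
Taking `r`-th roots gives the claim with `C₅ = 4 exp(2C₄/K - 1)`.
-/

theorem Real.rpow_le_mul_exp {r s x : ℝ} (hr : 0 < r) (hs : 0 < s) (hx : 0 ≤ x) :
    x ^ r ≤ (r / (exp 1 * s)) ^ r * exp (s * x) := by
  calc x ^ r = (r / (exp 1 * s) * (exp 1 * (s * x / r))) ^ r := by
        congr 1; field_simp
    _ ≤ (r / (exp 1 * s) * exp (s * x / r)) ^ r := by gcongr; exact exp_one_mul_le_exp
    _ = (r / (exp 1 * s)) ^ r * exp (s * x) := by
        rw [mul_rpow (by positivity) (exp_pos _).le, ← exp_mul, div_mul_cancel₀ _ hr.ne']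

theorem Real.abs_rpow_le_mul_exp_add_exp_neg {r s : ℝ} (hr : 0 < r) (hs : 0 < s) (x : ℝ) :
    |x| ^ r ≤ (r / (exp 1 * s)) ^ r * (exp (s * x) + exp (-s * x)) := by
  calc |x| ^ r ≤ (r / (exp 1 * s)) ^ r * exp |s * x| := by
        rw [abs_mul, abs_of_pos hs]; exact rpow_le_mul_exp hr hs (abs_nonneg x)
    _ ≤ (r / (exp 1 * s)) ^ r * (exp (s * x) + exp (-s * x)) := by
        rw [neg_mul]; gcongr; exact exp_abs_le _

theorem MeasureTheory.lintegral_abs_rpow_le_mul_lintegral_exp_add {Ω : Type*} [MeasurableSpace Ω]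
    {μ : Measure Ω} {ξ : Ω → ℝ} (hξ : Measurable ξ) {r s : ℝ} (hr : 0 < r) (hs : 0 < s) :
    ∫⁻ ω, ENNReal.ofReal (|ξ ω| ^ r) ∂μ ≤
      ENNReal.ofReal ((r / (exp 1 * s)) ^ r) *
        (∫⁻ ω, ENNReal.ofReal (exp (s * ξ ω)) ∂μ + ∫⁻ ω, ENNReal.ofReal (exp (-s * ξ ω)) ∂μ) := by
  have hmeas : Measurable fun ω ↦ ENNReal.ofReal (exp (s * ξ ω)) := by fun_prop
  rw [← lintegral_add_left hmeas, ← lintegral_const_mul' _ _ ofReal_ne_top]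
  refine lintegral_mono fun ω ↦ ?_
  rw [← ofReal_add (exp_pos _).le (exp_pos _).le, ← ofReal_mul (by positivity)]
  exact ofReal_le_ofReal (abs_rpow_le_mul_exp_add_exp_neg hr hs _)

theorem ENNReal.ofReal_rpow_mul_rpow_one_div_le {a r : ℝ} {M : ℝ≥0∞} (ha : 0 ≤ a) (hr : 1 ≤ r)
    (hM : 1 ≤ M) : (ENNReal.ofReal (a ^ r) * M) ^ (1 / r) ≤ ENNReal.ofReal a * M := by
  have hr0 : 0 < r := one_pos.trans_le hr
  rw [mul_rpow_of_nonneg _ _ (by positivity),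
    ← ofReal_rpow_of_nonneg (by positivity) (by positivity), ← rpow_mul, mul_one_div_cancel hr0.ne', rpow_one]
  gcongr
  calc M ^ (1 / r) ≤ M ^ (1 : ℝ) := rpow_le_rpow_of_exponent_le hM ((div_le_one hr0).2 hr)
    _ = M := rpow_one M

theorem stmt17_general (ρ : ℝ) :
    ∃ C₅ : ℝ, 0 < C₅ ∧
      ∀ (Ω : Type) (mΩ : MeasurableSpace Ω) (μ : Measure Ω),
        IsProbabilityMeasure μ → ∀ ξ : Ω → ℝ, Measurable ξ →
        Integrable ξ μ → (∫ ω, ξ ω ∂μ) = 0 →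
        ∀ K C₄ : ℝ, 0 < K → 0 < C₄ → C₄ / K = ρ →
        (∀ l : ℝ, |l| < K →
          ∫⁻ ω, ENNReal.ofReal (Real.exp (l * ξ ω)) ∂μ
            ≤ ENNReal.ofReal (Real.exp (C₄ / (K - |l|)))) →
        ∀ r : ℝ, 1 ≤ r →
          (∫⁻ ω, ENNReal.ofReal (|ξ ω| ^ r) ∂μ) ^ (1 / r)
            ≤ ENNReal.ofReal (C₅ * r / K) := by
  refine ⟨4 * exp (2 * ρ - 1), by positivity, ?_⟩
  intro Ω _ μ _ ξ hξ _ _ K C₄ hK hC₄ hρ hmgf r hr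
  have hρ_pos : 0 < ρ := hρ ▸ div_pos hC₄ hK
  have hmgf_half : ∀ l, |l| = K / 2 →
      ∫⁻ ω, ENNReal.ofReal (exp (l * ξ ω)) ∂μ ≤ ENNReal.ofReal (exp (2 * ρ)) := by
    intro l hl
    convert hmgf l (by linarith) using 4
    rw [hl, ← hρ]; field_simp; ring
  have hM : 1 ≤ ENNReal.ofReal (exp (2 * ρ)) + ENNReal.ofReal (exp (2 * ρ)) := by
    rw [← ofReal_add (exp_pos _).le (exp_pos _).le, ← ofReal_one]
    exact ofReal_le_ofReal (by linarith [one_le_exp (by positivity : 0 ≤ 2 * ρ)])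
  have hK2 : 0 < K / 2 := half_pos hK
  have hmoment := lintegral_abs_rpow_le_mul_lintegral_exp_add (μ := μ) hξ (one_pos.trans_le hr) hK2
  calc (∫⁻ ω, ENNReal.ofReal (|ξ ω| ^ r) ∂μ) ^ (1 / r)
      ≤ (ENNReal.ofReal ((r / (exp 1 * (K / 2))) ^ r) *
          (ENNReal.ofReal (exp (2 * ρ)) + ENNReal.ofReal (exp (2 * ρ)))) ^ (1 / r) := by
        gcongr
        refine hmoment.trans ?_
        gcongr
        · exact hmgf_half _ (abs_of_pos hK2)
        · exact hmgf_half _ (by rw [abs_neg, abs_of_pos hK2])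
    _ ≤ ENNReal.ofReal (r / (exp 1 * (K / 2))) *
          (ENNReal.ofReal (exp (2 * ρ)) + ENNReal.ofReal (exp (2 * ρ))) :=
        ofReal_rpow_mul_rpow_one_div_le (by positivity) hr hM
    _ = ENNReal.ofReal (4 * exp (2 * ρ - 1) * r / K) := by
        rw [← ofReal_add (exp_pos _).le (exp_pos _).le, ← ofReal_mul (by positivity), exp_sub]
        congr 1; field_simp; ring

/-- Example 3.2 (direct part): for every value `ρ > 0` of the ratio `C₄/K` there
is a constant `C₅ > 0` depending only on `ρ` such that every centered real
random variable `ξ` with `E exp(λξ) ≤ exp(C₄/(K − |λ|))` for all `|λ| < K`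
satisfies `(E|ξ|^r)^{1/r} ≤ C₅ · r / K` for every `r ≥ 1`. -/
theorem stmt17 (ρ : ℝ) (hρ : 0 < ρ) :
    ∃ C₅ : ℝ, 0 < C₅ ∧
      ∀ (Ω : Type) (mΩ : MeasurableSpace Ω) (μ : Measure Ω),
        IsProbabilityMeasure μ → ∀ ξ : Ω → ℝ, Measurable ξ →
        Integrable ξ μ → (∫ ω, ξ ω ∂μ) = 0 →
        ∀ K C₄ : ℝ, 0 < K → 0 < C₄ → C₄ / K = ρ →
        (∀ l : ℝ, |l| < K →
          ∫⁻ ω, ENNReal.ofReal (Real.exp (l * ξ ω)) ∂μ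
            ≤ ENNReal.ofReal (Real.exp (C₄ / (K - |l|)))) →
        ∀ r : ℝ, 1 ≤ r →
          (∫⁻ ω, ENNReal.ofReal (|ξ ω| ^ r) ∂μ) ^ (1 / r)
            ≤ ENNReal.ofReal (C₅ * r / K) :=
  stmt17_general ρ
end
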